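/- Let N ≥ 1, and μ ∈ K nonzero. Define a product on K[X] by X^i ∙ X^j = i·μ·X^{i+j} if j ≥ 1 and N divides j, X^i ∙ X^0 = i·λ·X^i for some λ ∈ K, and X^i ∙ X^j = 0 otherwise. Then this product satisfies the right preLie identity. -/

import Mathlib

/-!
On monomials the product is `X ^ i ∙ X ^ j = i c(j) X ^ (i + j)` for the weight `c(0) = λ`,
`c(j) = μ` if `N ∣ j`, `c(j) = 0` otherwise. For any weight with `c(j + k) = c(j)` whenever
`j > 0` and `c(k) ≠ 0`, the associator of `X ^ i, X ^ j, X ^ k` is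
`i² c(j) c(k) X ^ (i + j + k)`, which is symmetric in `j` and `k`; trilinearity extends the symmetry to all polynomials.
-/

open Polynomial

namespace LinearMap

variable {R M : Type*} [CommRing R] [AddCommGroup M] [Module R M]

def associator (B : M →ₗ[R] M →ₗ[R] M) : M →ₗ[R] M →ₗ[R] M →ₗ[R] M :=
  B.compr₂ B - (llcomp R M M M ∘ₗ B).compl₂ B

@[simp]
theorem associator_apply (B : M →ₗ[R] M →ₗ[R] M) (x y z : M) :
    associator B x y z = B (B x y) z - B x (B y z) := rfl

end LinearMap

namespace Polynomial

variable {R : Type*} [CommRing R] {B : R[X] →ₗ[R] R[X] →ₗ[R] R[X]} {c : ℕ → R}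

theorem associator_X_pow
    (hB : ∀ i j : ℕ, B (X ^ i) (X ^ j) = ((i : R) * c j) • X ^ (i + j))
    (hc : ∀ j k, 0 < j → c k ≠ 0 → c (j + k) = c j) (i j k : ℕ) :
    B.associator (X ^ i) (X ^ j) (X ^ k) =
      ((i : R) ^ 2 * (c j * c k)) • (X : R[X]) ^ (i + j + k) := by
  have hjk : (j : R) * (c k * c (j + k)) = j * (c k * c j) := by
    rcases Nat.eq_zero_or_pos j with rfl | hj
    · simp
    by_cases hk : c k = 0
    · simp [hk]
    · rw [hc j k hj hk]
  simp only [LinearMap.associator_apply, hB, map_smul, LinearMap.smul_apply, smul_smul,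
    ← sub_smul, ← add_assoc, Nat.cast_add]
  congr 1
  linear_combination -(i : R) * hjk

theorem lflip_comp_associator
    (hB : ∀ i j : ℕ, B (X ^ i) (X ^ j) = ((i : R) * c j) • X ^ (i + j))
    (hc : ∀ j k, 0 < j → c k ≠ 0 → c (j + k) = c j) :
    LinearMap.lflip.toLinearMap ∘ₗ B.associator = B.associator := by
  ext i j k : 6
  simp only [LinearMap.comp_apply, LinearEquiv.coe_coe, LinearMap.lflip_apply,
    LinearMap.flip_apply, monomial_one_right_eq_X_pow, associator_X_pow hB hc]
  rw [add_right_comm, mul_comm (c k)]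

end Polynomial

section ComPreLieWeight

variable {R : Type*} [CommRing R]

def comPreLieWeight (N : ℕ) (lam mu : R) (j : ℕ) : R :=
  if j = 0 then lam else if N ∣ j then mu else 0

theorem comPreLieWeight_add {N : ℕ} {lam mu : R} {j k : ℕ} (hj : 0 < j)
    (hk : comPreLieWeight N lam mu k ≠ 0) :
    comPreLieWeight N lam mu (j + k) = comPreLieWeight N lam mu j := by
  rcases Nat.eq_zero_or_pos k with rfl | hk0
  · rfl
  have hNk : N ∣ k := by
    by_contra h
    simp [comPreLieWeight, hk0.ne', h] at hk
  simp [comPreLieWeight, hj.ne', Nat.dvd_add_left hNk]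

end ComPreLieWeight

theorem stmt_6_general (K : Type*) [Field K] (N : ℕ)
    (lam mu : K)
    (B : K[X] →ₗ[K] K[X] →ₗ[K] K[X])
    (hB0 : ∀ i : ℕ, B (X ^ i) (X ^ 0) = ((i : K) * lam) • X ^ i)
    (hBdvd : ∀ i j : ℕ, 1 ≤ j → N ∣ j →
      B (X ^ i) (X ^ j) = ((i : K) * mu) • X ^ (i + j))
    (hBother : ∀ i j : ℕ, 1 ≤ j → ¬ N ∣ j → B (X ^ i) (X ^ j) = 0) :
    ∀ P Q R : K[X], B (B P Q) R - B P (B Q R) = B (B P R) Q - B P (B R Q) := by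
  have hB (i j : ℕ) :
      B (X ^ i) (X ^ j) = ((i : K) * comPreLieWeight N lam mu j) • X ^ (i + j) := by
    rcases Nat.eq_zero_or_pos j with rfl | hj
    · simpa [comPreLieWeight] using hB0 i
    by_cases hNj : N ∣ j
    · simpa [comPreLieWeight, hj.ne', hNj] using hBdvd i j hj hNj
    · simpa [comPreLieWeight, hj.ne', hNj] using hBother i j hj hNj
  have hflip := lflip_comp_associator hB fun _ _ hj hk ↦ comPreLieWeight_add hj hk
  intro P Q S
  exact congr($hflip P Q S).symm

theorem stmt_6 (K : Type*) [Field K] [CharZero K] (N : ℕ) (hN : 1 ≤ N)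
    (lam mu : K) (hmu : mu ≠ 0)
    (B : K[X] →ₗ[K] K[X] →ₗ[K] K[X])
    (hB0 : ∀ i : ℕ, B (X ^ i) (X ^ 0) = ((i : K) * lam) • X ^ i)
    (hBdvd : ∀ i j : ℕ, 1 ≤ j → N ∣ j →
      B (X ^ i) (X ^ j) = ((i : K) * mu) • X ^ (i + j))
    (hBother : ∀ i j : ℕ, 1 ≤ j → ¬ N ∣ j → B (X ^ i) (X ^ j) = 0) :
    ∀ P Q R : K[X], B (B P Q) R - B P (B Q R) = B (B P R) Q - B P (B R Q) :=
  stmt_6_general K N lam mu B hB0 hBdvd hBother
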